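/- Let 𝔪 = (Δ₁, …, Δ_N) and 𝔫 = (Δ'₁, …, Δ'_{N'}) both be ladder multisegments (aligned: left and right endpoints strictly decreasing along each list). With X = {(i,j) : Δ_i ≺ Δ'_j}, Y = {(i,j) : (Δ_i − 1) ≺ Δ'_j}, and the relation (i₂,j₂) ↝ (i₁,j₁) iff (i₁ = i₂ and Δ'_{j₂} ≺ Δ'_{j₁}) or (j₁ = j₂ and Δ_{i₁} ≺ Δ_{i₂}): there is NO ↝-matching function from X to Y if and only if there exist indices i, j and k ≥ 0 such that (i+l, j+l) ∈ X for all l = 0, …, k, and (i−1, j) ∉ Y, and (i+k, j+k+1) ∉ Y. -/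
import Mathlib


/-- A segment `[a, b]` of integers (meaningful when `a ≤ b`). -/
structure Seg where
  a : ℤ
  b : ℤ
deriving DecidableEq

/-- `Δ` is a genuine segment, i.e. `a ≤ b`. -/
def Seg.IsSeg (Δ : Seg) : Prop := Δ.a ≤ Δ.b

/-- Containment of segments `Δ ⊆ Δ'`. -/
def Seg.Sub (Δ Δ' : Seg) : Prop := Δ'.a ≤ Δ.a ∧ Δ.b ≤ Δ'.b

/-- `Δ` and `Δ'` are linked: their union is again a segment (interval) but neither is
contained in the other. -/
def Seg.Linked (Δ Δ' : Seg) : Prop :=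
  max Δ.a Δ'.a ≤ min Δ.b Δ'.b + 1 ∧ ¬ Δ.Sub Δ' ∧ ¬ Δ'.Sub Δ

/-- `Δ` precedes `Δ'` (`Δ ≺ Δ'`): they are linked and `Δ` starts strictly earlier. -/
def Seg.Prec (Δ Δ' : Seg) : Prop := Δ.Linked Δ' ∧ Δ.a < Δ'.a

/-- The shifted segment `Δ - 1 = [a-1, b-1]`. -/
def Seg.shift (Δ : Seg) : Seg := ⟨Δ.a - 1, Δ.b - 1⟩

/-- There exists a matching function from `X` into `Y` for the relation `R`
(read `R q p` as `q ↝ p`): an injective `f : X → Y` with `f p ↝ p` for all `p ∈ X`. -/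
def ExistsMatching {ι : Type*} (X Y : Set ι) (R : ι → ι → Prop) : Prop :=
  ∃ f : X → Y, Function.Injective f ∧ ∀ p : X, R (f p : ι) (p : ι)

lemma prec_iff (Δ Δ' : Seg) :
    Δ.Prec Δ' ↔ Δ.a < Δ'.a ∧ Δ'.a ≤ Δ.b + 1 ∧ Δ.b < Δ'.b := by
  unfold Seg.Prec Seg.Linked Seg.Sub
  omega

lemma prec_shift_iff (Δ Δ' : Seg) :
    Δ.shift.Prec Δ' ↔ Δ.a ≤ Δ'.a ∧ Δ'.a ≤ Δ.b ∧ Δ.b ≤ Δ'.b := by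
  rw [prec_iff]
  show Δ.a - 1 < Δ'.a ∧ Δ'.a ≤ (Δ.b - 1) + 1 ∧ Δ.b - 1 < Δ'.b ↔ _
  omega

open Classical in
noncomputable def psiAux (Xset : Set (ℤ × ℤ)) (i j : ℤ) (q : ℤ × ℤ) : ℤ × ℤ :=
  if q ∈ Xset then q else (i + (q.2 - j), q.2)

lemma no_matching_of_NC {N N' : ℤ} {m n : ℤ → Seg} {Xset Yset : Set (ℤ × ℤ)}
    (hml : ∀ i j, 0 ≤ i → i < j → j < N → (m j).a < (m i).a ∧ (m j).b < (m i).b)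
    (hnl : ∀ i j, 0 ≤ i → i < j → j < N' → (n j).a < (n i).a ∧ (n j).b < (n i).b)
    (hX : ∀ r c : ℤ, (r, c) ∈ Xset ↔
      0 ≤ r ∧ r < N ∧ 0 ≤ c ∧ c < N' ∧
        ((m r).a < (n c).a ∧ (n c).a ≤ (m r).b + 1 ∧ (m r).b < (n c).b))
    (hY : ∀ r c : ℤ, (r, c) ∈ Yset ↔
      0 ≤ r ∧ r < N ∧ 0 ≤ c ∧ c < N' ∧
        ((m r).a ≤ (n c).a ∧ (n c).a ≤ (m r).b ∧ (m r).b ≤ (n c).b))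
    (i j : ℤ) (k : ℕ)
    (hst : ∀ l : ℕ, l ≤ k → (i + (l : ℤ), j + (l : ℤ)) ∈ Xset)
    (hU : (i - 1, j) ∉ Yset)
    (hR : (i + (k : ℤ), j + (k : ℤ) + 1) ∉ Yset) :
    ¬ ExistsMatching Xset Yset
      (fun q p => (p.1 = q.1 ∧ (n q.2).Prec (n p.2)) ∨ (p.2 = q.2 ∧ (m p.1).Prec (m q.1))) := by
  classical
  rintro ⟨f, finj, frel⟩
  -- monotone helpers
  have mle : ∀ r r' : ℤ, 0 ≤ r → r ≤ r' → r' < N →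
      (m r').a ≤ (m r).a ∧ (m r').b ≤ (m r).b := by
    intro r r' h0 h1 h2
    rcases eq_or_lt_of_le h1 with h | h
    · subst h; exact ⟨le_rfl, le_rfl⟩
    · exact ⟨(hml r r' h0 h h2).1.le, (hml r r' h0 h h2).2.le⟩
  have nle : ∀ c c' : ℤ, 0 ≤ c → c ≤ c' → c' < N' →
      (n c').a ≤ (n c).a ∧ (n c').b ≤ (n c).b := by
    intro c c' h0 h1 h2
    rcases eq_or_lt_of_le h1 with h | h
    · subst h; exact ⟨le_rfl, le_rfl⟩
    · exact ⟨(hnl c c' h0 h h2).1.le, (hnl c c' h0 h h2).2.le⟩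
  have hiX : ∀ s : ℤ, 0 ≤ s → s ≤ (k : ℤ) → (i + s, j + s) ∈ Xset := by
    intro s h0 h1
    have h := hst s.toNat (by omega)
    rwa [Int.toNat_of_nonneg h0] at h
  have hX00 : (i, j) ∈ Xset := by simpa using hiX 0 le_rfl (Int.natCast_nonneg k)
  have hb0 := (hX i j).mp hX00
  have hbk := (hX (i + k) (j + k)).mp (hiX k (Int.natCast_nonneg k) le_rfl)
  -- row lemma
  have rowL : ∀ r c₀ c : ℤ, (r, c₀) ∈ Xset → (r, c) ∈ Yset → c₀ < c → (r, c₀ + 1) ∈ Yset := by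
    intro r c₀ c hx hy hlt
    rw [hX] at hx; rw [hY] at hy ⊢
    have h1 := nle (c₀ + 1) c (by omega) (by omega) (by omega)
    have h2 := hnl c₀ (c₀ + 1) (by omega) (by omega) (by omega)
    omega
  have colL : ∀ r₀ r c : ℤ, (r₀, c) ∈ Xset → (r, c) ∈ Yset → r < r₀ → (r₀ - 1, c) ∈ Yset := by
    intro r₀ r c hx hy hlt
    rw [hX] at hx; rw [hY] at hy ⊢
    have h1 := mle r (r₀ - 1) (by omega) (by omega) (by omega)
    have h2 := hml (r₀ - 1) r₀ (by omega) (by omega) (by omega)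
    omega
  have lemC : ∀ r c₀ c : ℤ, (r + 1, c₀ + 1) ∈ Xset → (r, c) ∈ Yset → c₀ + 2 ≤ c →
      (r + 1, c) ∈ Yset := by
    intro r c₀ c hx hy hc
    rw [hX] at hx; rw [hY] at hy ⊢
    have h1 := hml r (r + 1) (by omega) (by omega) (by omega)
    have h2 := nle (c₀ + 2) c (by omega) (by omega) (by omega)
    have h3 := hnl (c₀ + 1) (c₀ + 2) (by omega) (by omega) (by omega)
    omega
  have lemD : ∀ r₀ r c : ℤ, (r₀, c) ∈ Xset → (r, c + 1) ∈ Yset → r ≤ r₀ - 1 →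
      (r, c) ∈ Yset := by
    intro r₀ r c hx hy hr
    rw [hX] at hx; rw [hY] at hy ⊢
    have h1 := hnl c (c + 1) (by omega) (by omega) (by omega)
    have h2 := mle r (r₀ - 1) (by omega) (by omega) (by omega)
    have h3 := hml (r₀ - 1) r₀ (by omega) (by omega) (by omega)
    omega
  -- no Y points to the right of the box
  have E1 : ∀ t : ℕ, ∀ r c : ℤ, r = i + (k : ℤ) - (t : ℤ) → i ≤ r → j + (k : ℤ) + 1 ≤ c →
      (r, c) ∉ Yset := by
    intro t
    induction t with
    | zero =>
      intro r c hr _ hc hy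
      have hrk : r = i + (k : ℤ) := by push_cast at hr; omega
      subst hrk
      exact hR (rowL (i + (k:ℤ)) (j + (k:ℤ)) c (hiX k (Int.natCast_nonneg k) le_rfl) hy (by omega))
    | succ t ih =>
      intro r c hr hir hc hy
      have hr' : r = i + (k : ℤ) - (t : ℤ) - 1 := by push_cast at hr; omega
      have hx : (r + 1, (j + (r - i)) + 1) ∈ Xset := by
        have h := hiX (r + 1 - i) (by omega) (by omega)
        have e1 : i + (r + 1 - i) = r + 1 := by ring
        have e2 : j + (r + 1 - i) = j + (r - i) + 1 := by ring
        rw [e1, e2] at h; exact h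
      have h2 := lemC r (j + (r - i)) c hx hy (by omega)
      exact ih (r + 1) c (by omega) (by omega) hc h2
  -- no Y points above the box
  have E2 : ∀ t : ℕ, ∀ r c : ℤ, c = j + (t : ℤ) → c ≤ j + (k : ℤ) → r ≤ i - 1 →
      (r, c) ∉ Yset := by
    intro t
    induction t with
    | zero =>
      intro r c hc _ hr hy
      have hcj : c = j := by push_cast at hc; omega
      rw [hcj] at hy
      exact hU (colL i r j hX00 hy (by omega))
    | succ t ih =>
      intro r c hc hck hr hy
      have hc' : c = j + (t : ℤ) + 1 := by push_cast at hc; omega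
      have hx : (i + (t : ℤ), j + (t : ℤ)) ∈ Xset :=
        hiX t (Int.natCast_nonneg t) (by omega)
      have hy' : (r, (j + (t : ℤ)) + 1) ∈ Yset := by rw [show j + (t:ℤ) + 1 = c by omega]; exact hy
      have h2 := lemD (i + (t : ℤ)) r (j + (t : ℤ)) hx hy' (by omega)
      exact ih r (j + (t : ℤ)) rfl (by omega) hr h2
  -- at most one Y-not-X point per column
  have uniq : ∀ r r' c : ℤ, (r, c) ∈ Yset → (r', c) ∈ Yset → r < r' → (r', c) ∈ Xset := by
    intro r r' c hy hy' hlt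
    rw [hY] at hy hy'; rw [hX]
    have h1 := hml r r' (by omega) hlt (by omega)
    omega
  -- box sets
  set S : Set (ℤ × ℤ) :=
    {p | p ∈ Xset ∧ i ≤ p.1 ∧ p.1 ≤ i + (k:ℤ) ∧ j ≤ p.2 ∧ p.2 ≤ j + (k:ℤ) ∧ p.1 - i ≤ p.2 - j}
    with hSdef
  set T : Set (ℤ × ℤ) :=
    {p | p ∈ Yset ∧ i ≤ p.1 ∧ p.1 ≤ i + (k:ℤ) ∧ j ≤ p.2 ∧ p.2 ≤ j + (k:ℤ) ∧ p.1 - i < p.2 - j}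
    with hTdef
  have himg : ∀ (p : ℤ × ℤ) (hpX : p ∈ Xset), p ∈ S → ((f ⟨p, hpX⟩ : ℤ × ℤ)) ∈ T := by
    rintro ⟨p1, p2⟩ hpX hpS
    have hpS' : (p1, p2) ∈ Xset ∧ i ≤ p1 ∧ p1 ≤ i + (k:ℤ) ∧ j ≤ p2 ∧ p2 ≤ j + (k:ℤ) ∧
        p1 - i ≤ p2 - j := hpS
    obtain ⟨-, hpi, hpk, hpj, hpjk, hpd⟩ := hpS'
    have hxp := (hX p1 p2).mp hpX
    have main : ∀ q1 q2 : ℤ, (q1, q2) ∈ Yset →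
        ((p1 = q1 ∧ (n q2).Prec (n p2)) ∨ (p2 = q2 ∧ (m p1).Prec (m q1))) →
        (q1, q2) ∈ T := by
      intro q1 q2 hqY hrel
      have hyq := (hY q1 q2).mp hqY
      rcases hrel with ⟨h1, h2⟩ | ⟨h1, h2⟩
      · rw [prec_iff] at h2
        have hlt : p2 < q2 := by
          by_contra hcon
          have := nle q2 p2 (by omega) (by omega) (by omega)
          omega
        have hub : q2 ≤ j + (k : ℤ) := by
          by_contra hcon
          exact E1 (i + (k:ℤ) - q1).toNat q1 q2
            (by rw [Int.toNat_of_nonneg (by omega)]; ring) (by omega) (by omega) hqY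
        exact ⟨hqY, by omega, by omega, by omega, by omega, by omega⟩
      · rw [prec_iff] at h2
        have hlt : q1 < p1 := by
          by_contra hcon
          have := mle p1 q1 (by omega) (by omega) (by omega)
          omega
        have hlb : i ≤ q1 := by
          by_contra hcon
          exact E2 (q2 - j).toNat q1 q2
            (by rw [Int.toNat_of_nonneg (by omega)]; ring) (by omega) (by omega) hqY
        exact ⟨hqY, by omega, by omega, by omega, by omega, by omega⟩
    exact main (f ⟨(p1, p2), hpX⟩ : ℤ × ℤ).1 (f ⟨(p1, p2), hpX⟩ : ℤ × ℤ).2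
      (f ⟨(p1, p2), hpX⟩).2 (frel ⟨(p1, p2), hpX⟩)
  have hpsiS : ∀ q : ℤ × ℤ, q ∈ T → psiAux Xset i j q ∈ S := by
    rintro ⟨q1, q2⟩ hq
    have hq' : (q1, q2) ∈ Yset ∧ i ≤ q1 ∧ q1 ≤ i + (k:ℤ) ∧ j ≤ q2 ∧ q2 ≤ j + (k:ℤ) ∧
        q1 - i < q2 - j := hq
    obtain ⟨hqY, h1, h2, h3, h4, h5⟩ := hq'
    by_cases hx : (q1, q2) ∈ Xset
    · rw [psiAux, if_pos hx]
      exact ⟨hx, h1, h2, h3, h4, by omega⟩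
    · rw [psiAux, if_neg hx]
      have hxm : (i + (q2 - j), q2) ∈ Xset := by
        have h := hiX (q2 - j) (by omega) (by omega)
        rwa [show j + (q2 - j) = q2 by ring] at h
      exact ⟨hxm, by omega, by omega, by omega, by omega, by omega⟩
  have hpsiInj : ∀ q : ℤ × ℤ, q ∈ T → ∀ q' : ℤ × ℤ, q' ∈ T →
      psiAux Xset i j q = psiAux Xset i j q' → q = q' := by
    rintro ⟨q1, q2⟩ hq ⟨q'1, q'2⟩ hq' he
    have hqm : (q1, q2) ∈ Yset ∧ i ≤ q1 ∧ q1 ≤ i + (k:ℤ) ∧ j ≤ q2 ∧ q2 ≤ j + (k:ℤ) ∧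
        q1 - i < q2 - j := hq
    have hq'm : (q'1, q'2) ∈ Yset ∧ i ≤ q'1 ∧ q'1 ≤ i + (k:ℤ) ∧ j ≤ q'2 ∧ q'2 ≤ j + (k:ℤ) ∧
        q'1 - i < q'2 - j := hq'
    obtain ⟨hqY, hq1, hq2, hq3, hq4, hq5⟩ := hqm
    obtain ⟨hq'Y, hq'1, hq'2, hq'3, hq'4, hq'5⟩ := hq'm
    by_cases hx : (q1, q2) ∈ Xset <;> by_cases hx' : (q'1, q'2) ∈ Xset
    · rwa [psiAux, if_pos hx, psiAux, if_pos hx'] at he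
    · rw [psiAux, if_pos hx, psiAux, if_neg hx'] at he
      rw [Prod.mk.injEq] at he
      obtain ⟨e1, e2⟩ := he
      exfalso; omega
    · rw [psiAux, if_neg hx, psiAux, if_pos hx'] at he
      rw [Prod.mk.injEq] at he
      obtain ⟨e1, e2⟩ := he
      exfalso; omega
    · rw [psiAux, if_neg hx, psiAux, if_neg hx'] at he
      rw [Prod.mk.injEq] at he
      obtain ⟨e1, e2⟩ := he
      subst e2
      rcases lt_trichotomy q1 q'1 with h | h | h
      · exact absurd (uniq q1 q'1 q2 hqY hq'Y h) hx'
      · rw [h]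
      · exact absurd (uniq q'1 q1 q2 hq'Y hqY h) hx
  have hpsiNe : ∀ q : ℤ × ℤ, q ∈ T → psiAux Xset i j q ≠ (i, j) := by
    rintro ⟨q1, q2⟩ hq he
    have hqm : (q1, q2) ∈ Yset ∧ i ≤ q1 ∧ q1 ≤ i + (k:ℤ) ∧ j ≤ q2 ∧ q2 ≤ j + (k:ℤ) ∧
        q1 - i < q2 - j := hq
    obtain ⟨hqY, hq1, hq2, hq3, hq4, hq5⟩ := hqm
    by_cases hx : (q1, q2) ∈ Xset
    · rw [psiAux, if_pos hx, Prod.mk.injEq] at he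
      omega
    · rw [psiAux, if_neg hx, Prod.mk.injEq] at he
      omega
  -- finiteness and the contradiction
  have hSfin : S.Finite := by
    apply Set.Finite.subset ((Set.finite_Icc i (i + (k:ℤ))).prod (Set.finite_Icc j (j + (k:ℤ))))
    rintro ⟨a, b⟩ ⟨-, h1, h2, h3, h4, -⟩
    exact ⟨Set.mem_Icc.mpr ⟨h1, h2⟩, Set.mem_Icc.mpr ⟨h3, h4⟩⟩
  haveI := hSfin.to_subtype
  let F : S → S := fun p => ⟨psiAux Xset i j ((f ⟨(p : ℤ × ℤ), p.2.1⟩ : ℤ × ℤ)),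
    hpsiS _ (himg (p : ℤ × ℤ) p.2.1 p.2)⟩
  have hFinj : Function.Injective F := by
    intro p p' he
    have he' := congrArg Subtype.val he
    have heq := hpsiInj _ (himg (p : ℤ × ℤ) p.2.1 p.2) _ (himg (p' : ℤ × ℤ) p'.2.1 p'.2) he'
    have h3 : f ⟨(p : ℤ × ℤ), p.2.1⟩ = f ⟨(p' : ℤ × ℤ), p'.2.1⟩ := Subtype.ext heq
    have h4 := finj h3
    rw [Subtype.mk.injEq] at h4
    exact Subtype.ext h4
  have hijS : (i, j) ∈ S := ⟨hX00, by omega, by omega, by omega, by omega, by omega⟩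
  obtain ⟨p, hp⟩ := (Finite.injective_iff_surjective.mp hFinj) ⟨(i, j), hijS⟩
  have hval : psiAux Xset i j ((f ⟨(p : ℤ × ℤ), p.2.1⟩ : ℤ × ℤ)) = (i, j) :=
    congrArg Subtype.val hp
  exact hpsiNe _ (himg (p : ℤ × ℤ) p.2.1 p.2) hval

def AllUP (Xset Yset : Set (ℤ × ℤ)) (p : ℤ × ℤ) : Prop :=
  ∀ u : ℕ, (∀ v : ℕ, v ≤ u → (p.1 - (v : ℤ), p.2 - (v : ℤ)) ∈ Xset) →
    (p.1 - (u : ℤ) - 1, p.2 - (u : ℤ)) ∈ Yset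

open Classical in
noncomputable def matchF (Xset Yset : Set (ℤ × ℤ)) (p : ℤ × ℤ) : ℤ × ℤ :=
  if AllUP Xset Yset p then (p.1 - 1, p.2) else (p.1, p.2 + 1)

lemma matching_of_not_NC {N N' : ℤ} {m n : ℤ → Seg} {Xset Yset : Set (ℤ × ℤ)}
    (hml : ∀ i j, 0 ≤ i → i < j → j < N → (m j).a < (m i).a ∧ (m j).b < (m i).b)
    (hnl : ∀ i j, 0 ≤ i → i < j → j < N' → (n j).a < (n i).a ∧ (n j).b < (n i).b)
    (hX : ∀ r c : ℤ, (r, c) ∈ Xset ↔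
      0 ≤ r ∧ r < N ∧ 0 ≤ c ∧ c < N' ∧
        ((m r).a < (n c).a ∧ (n c).a ≤ (m r).b + 1 ∧ (m r).b < (n c).b))
    (hY : ∀ r c : ℤ, (r, c) ∈ Yset ↔
      0 ≤ r ∧ r < N ∧ 0 ≤ c ∧ c < N' ∧
        ((m r).a ≤ (n c).a ∧ (n c).a ≤ (m r).b ∧ (m r).b ≤ (n c).b))
    (hNC : ∀ (i j : ℤ) (k : ℕ), (∀ l : ℕ, l ≤ k → (i + (l : ℤ), j + (l : ℤ)) ∈ Xset) →
        (i - 1, j) ∉ Yset → (i + (k : ℤ), j + (k : ℤ) + 1) ∈ Yset) :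
    ExistsMatching Xset Yset
      (fun q p => (p.1 = q.1 ∧ (n q.2).Prec (n p.2)) ∨ (p.2 = q.2 ∧ (m p.1).Prec (m q.1))) := by
  classical
  have hUY : ∀ p : ℤ × ℤ, p ∈ Xset → AllUP Xset Yset p → (p.1 - 1, p.2) ∈ Yset := by
    intro p hp h
    have h0 := h 0 (by
      intro v hv
      have hv0 : v = 0 := Nat.le_zero.mp hv
      subst hv0
      simpa using hp)
    simpa using h0
  have hRY : ∀ p : ℤ × ℤ, p ∈ Xset → ¬ AllUP Xset Yset p → (p.1, p.2 + 1) ∈ Yset := by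
    intro p hp h
    simp only [AllUP, not_forall] at h
    obtain ⟨u, hch, hnot⟩ := h
    have hstair : ∀ l : ℕ, l ≤ u → ((p.1 - (u : ℤ)) + (l : ℤ), (p.2 - (u : ℤ)) + (l : ℤ)) ∈ Xset := by
      intro l hl
      have hc := hch (u - l) (Nat.sub_le u l)
      have e1 : p.1 - ((u - l : ℕ) : ℤ) = p.1 - (u : ℤ) + (l : ℤ) := by
        rw [Nat.cast_sub hl]; ring
      have e2 : p.2 - ((u - l : ℕ) : ℤ) = p.2 - (u : ℤ) + (l : ℤ) := by
        rw [Nat.cast_sub hl]; ring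
      rw [e1, e2] at hc
      exact hc
    have key := hNC (p.1 - (u : ℤ)) (p.2 - (u : ℤ)) u hstair hnot
    have e1 : p.1 - (u : ℤ) + (u : ℤ) = p.1 := by ring
    have e2 : p.2 - (u : ℤ) + (u : ℤ) + 1 = p.2 + 1 := by ring
    rw [e1, e2] at key
    exact key
  have hmem : ∀ p : ℤ × ℤ, p ∈ Xset → matchF Xset Yset p ∈ Yset := by
    intro p hp
    by_cases h : AllUP Xset Yset p
    · rw [matchF, if_pos h]; exact hUY p hp h
    · rw [matchF, if_neg h]; exact hRY p hp h
  have hAimp : ∀ a b : ℤ × ℤ, a ∈ Xset → b.1 = a.1 - 1 → b.2 = a.2 - 1 →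
      AllUP Xset Yset a → AllUP Xset Yset b := by
    intro a b ha e1 e2 hA u hch
    have hch' : ∀ v : ℕ, v ≤ u + 1 → (a.1 - (v : ℤ), a.2 - (v : ℤ)) ∈ Xset := by
      intro v hv
      match v with
      | 0 => simpa using ha
      | (w+1) =>
        have hc := hch w (by omega)
        have f1 : a.1 - ((w + 1 : ℕ) : ℤ) = b.1 - (w : ℤ) := by push_cast; omega
        have f2 : a.2 - ((w + 1 : ℕ) : ℤ) = b.2 - (w : ℤ) := by push_cast; omega
        rw [f1, f2]
        exact hc
    have hk := hA (u + 1) hch'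
    have f1 : a.1 - ((u + 1 : ℕ) : ℤ) - 1 = b.1 - (u : ℤ) - 1 := by push_cast; omega
    have f2 : a.2 - ((u + 1 : ℕ) : ℤ) = b.2 - (u : ℤ) := by push_cast; omega
    rw [f1, f2] at hk
    exact hk
  refine ⟨fun p => ⟨matchF Xset Yset (p : ℤ × ℤ), hmem _ p.2⟩, ?_, ?_⟩
  · rintro ⟨p, hp⟩ ⟨q, hq⟩ he
    rw [Subtype.mk.injEq] at he
    dsimp only at he
    apply Subtype.ext
    show p = q
    by_cases h1 : AllUP Xset Yset p <;> by_cases h2 : AllUP Xset Yset q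
    · rw [matchF, if_pos h1, matchF, if_pos h2, Prod.mk.injEq] at he
      rw [Prod.ext_iff]
      constructor <;> omega
    · rw [matchF, if_pos h1, matchF, if_neg h2, Prod.mk.injEq] at he
      obtain ⟨e1, e2⟩ := he
      exact absurd (hAimp p q hp (by omega) (by omega) h1) h2
    · rw [matchF, if_neg h1, matchF, if_pos h2, Prod.mk.injEq] at he
      obtain ⟨e1, e2⟩ := he
      exact absurd (hAimp q p hq (by omega) (by omega) h2) h1
    · rw [matchF, if_neg h1, matchF, if_neg h2, Prod.mk.injEq] at he
      rw [Prod.ext_iff]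
      constructor <;> omega
  · rintro ⟨p, hpX⟩
    show (p.1 = (matchF Xset Yset p).1 ∧ (n (matchF Xset Yset p).2).Prec (n p.2)) ∨
      (p.2 = (matchF Xset Yset p).2 ∧ (m p.1).Prec (m (matchF Xset Yset p).1))
    have hxc := (hX p.1 p.2).mp (by simpa using hpX)
    by_cases h : AllUP Xset Yset p
    · have hy := hUY p hpX h
      have hyc := (hY (p.1 - 1) p.2).mp hy
      refine Or.inr ⟨?_, ?_⟩
      · rw [matchF, if_pos h]
      · rw [matchF, if_pos h]
        show (m p.1).Prec (m (p.1 - 1))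
        rw [prec_iff]
        have := hml (p.1 - 1) p.1 (by omega) (by omega) (by omega)
        omega
    · have hy := hRY p hpX h
      have hyc := (hY p.1 (p.2 + 1)).mp hy
      refine Or.inl ⟨?_, ?_⟩
      · rw [matchF, if_neg h]
      · rw [matchF, if_neg h]
        show (n (p.2 + 1)).Prec (n p.2)
        rw [prec_iff]
        have := hnl p.2 (p.2 + 1) (by omega) (by omega) (by omega)
        omega

/-- For two ladders `𝔪 = (Δ₀, …, Δ_{N-1})` and `𝔫 = (Δ'₀, …, Δ'_{N'-1})`, with
`X = {(i,j) : Δ_i ≺ Δ'_j}`, `Y = {(i,j) : (Δ_i − 1) ≺ Δ'_j}` and relation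
`(i₂,j₂) ↝ (i₁,j₁) ↔ (i₁ = i₂ ∧ Δ'_{j₂} ≺ Δ'_{j₁}) ∨ (j₁ = j₂ ∧ Δ_{i₁} ≺ Δ_{i₂})`,
there is NO matching function from `X` to `Y` iff there exist `i, j` and `k ≥ 0` with
`(i+l, j+l) ∈ X` for `l = 0, …, k`, `(i−1, j) ∉ Y` and `(i+k, j+k+1) ∉ Y`. -/
theorem two_ladders_no_matching_iff_NC (N N' : ℤ) (m n : ℤ → Seg)
    (hm : ∀ i, 0 ≤ i → i < N → (m i).IsSeg)
    (hn : ∀ j, 0 ≤ j → j < N' → (n j).IsSeg)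
    (hmladder : ∀ i j, 0 ≤ i → i < j → j < N → (m j).a < (m i).a ∧ (m j).b < (m i).b)
    (hnladder : ∀ i j, 0 ≤ i → i < j → j < N' → (n j).a < (n i).a ∧ (n j).b < (n i).b) :
    ¬ ExistsMatching
        {p : ℤ × ℤ | 0 ≤ p.1 ∧ p.1 < N ∧ 0 ≤ p.2 ∧ p.2 < N' ∧ (m p.1).Prec (n p.2)}
        {p : ℤ × ℤ | 0 ≤ p.1 ∧ p.1 < N ∧ 0 ≤ p.2 ∧ p.2 < N' ∧ (m p.1).shift.Prec (n p.2)}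
        (fun q p => (p.1 = q.1 ∧ (n q.2).Prec (n p.2)) ∨ (p.2 = q.2 ∧ (m p.1).Prec (m q.1))) ↔
      ∃ i j : ℤ, ∃ k : ℕ,
        (∀ l : ℕ, l ≤ k → (i + (l : ℤ), j + (l : ℤ)) ∈
          {p : ℤ × ℤ | 0 ≤ p.1 ∧ p.1 < N ∧ 0 ≤ p.2 ∧ p.2 < N' ∧ (m p.1).Prec (n p.2)}) ∧
        (i - 1, j) ∉
          {p : ℤ × ℤ | 0 ≤ p.1 ∧ p.1 < N ∧ 0 ≤ p.2 ∧ p.2 < N' ∧ (m p.1).shift.Prec (n p.2)} ∧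
        (i + (k : ℤ), j + (k : ℤ) + 1) ∉
          {p : ℤ × ℤ | 0 ≤ p.1 ∧ p.1 < N ∧ 0 ≤ p.2 ∧ p.2 < N' ∧ (m p.1).shift.Prec (n p.2)} := by
  have hXc : ∀ r c : ℤ, ((r, c) ∈
      {p : ℤ × ℤ | 0 ≤ p.1 ∧ p.1 < N ∧ 0 ≤ p.2 ∧ p.2 < N' ∧ (m p.1).Prec (n p.2)}) ↔
      0 ≤ r ∧ r < N ∧ 0 ≤ c ∧ c < N' ∧
        ((m r).a < (n c).a ∧ (n c).a ≤ (m r).b + 1 ∧ (m r).b < (n c).b) := by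
    intro r c
    exact Iff.intro
      (fun h => ⟨h.1, h.2.1, h.2.2.1, h.2.2.2.1, (prec_iff _ _).mp h.2.2.2.2⟩)
      (fun h => ⟨h.1, h.2.1, h.2.2.1, h.2.2.2.1, (prec_iff _ _).mpr h.2.2.2.2⟩)
  have hYc : ∀ r c : ℤ, ((r, c) ∈
      {p : ℤ × ℤ | 0 ≤ p.1 ∧ p.1 < N ∧ 0 ≤ p.2 ∧ p.2 < N' ∧ (m p.1).shift.Prec (n p.2)}) ↔
      0 ≤ r ∧ r < N ∧ 0 ≤ c ∧ c < N' ∧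
        ((m r).a ≤ (n c).a ∧ (n c).a ≤ (m r).b ∧ (m r).b ≤ (n c).b) := by
    intro r c
    exact Iff.intro
      (fun h => ⟨h.1, h.2.1, h.2.2.1, h.2.2.2.1, (prec_shift_iff _ _).mp h.2.2.2.2⟩)
      (fun h => ⟨h.1, h.2.1, h.2.2.1, h.2.2.2.1, (prec_shift_iff _ _).mpr h.2.2.2.2⟩)
  constructor
  · intro hnm
    by_contra hnc
    push_neg at hnc
    exact hnm (matching_of_not_NC hmladder hnladder hXc hYc hnc)
  · rintro ⟨i, j, k, h1, h2, h3⟩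
    exact no_matching_of_NC hmladder hnladder hXc hYc i j k h1 h2 h3
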